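/- Suppose 0 < l(x,a) ≤ M for all (x,a) and U satisfies H[p₀]^(k)(x,p,U(x)) ≤ −γ(U(x)) for all x ∉ T, p ∈ ∂_P U(x). Define λ(u) := inf{ l(x,a) : U(x) ≥ u, a ∈ A }, γ̃(u) := (p₀(u)λ(u) + γ(u))/2, p̃₀(u) := (p₀(u) + γ(u)/M)/2. Then H[p̃₀]^(k)(x,p,U(x)) ≤ −γ̃(U(x)) for all x ∉ T and p ∈ ∂_P U(x). -/
import Mathlib


open scoped RealInnerProductSpace

/-- The proximal subdifferential of `U` at `x`. -/
def proxSubdiff {n : ℕ} (U : EuclideanSpace ℝ (Fin n) → ℝ)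
    (x : EuclideanSpace ℝ (Fin n)) : Set (EuclideanSpace ℝ (Fin n)) :=
  {p | ∃ ρ > (0 : ℝ), ∃ c > (0 : ℝ), ∀ y ∈ Metric.closedBall x c,
    ⟪p, y - x⟫ ≤ U y - U x + ρ * ‖y - x‖ ^ 2}

theorem stmt_10 (n : ℕ) (Label A : Type*) (F : Finset Label) (hne : F.Nonempty)
    (v : Label → EuclideanSpace ℝ (Fin n) → EuclideanSpace ℝ (Fin n))
    (Aset : Label → Finset A) (hA : ∀ β, (Aset β).Nonempty)
    (l : EuclideanSpace ℝ (Fin n) → A → ℝ) (M : ℝ)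
    (hl : ∀ x a, 0 < l x a ∧ l x a ≤ M)
    (p₀ γ : ℝ → ℝ)
    (hp₀ : ∀ u, 0 ≤ p₀ u ∧ p₀ u ≤ 1) (hγ : ∀ u, 0 < γ u)
    (T : Set (EuclideanSpace ℝ (Fin n))) (U : EuclideanSpace ℝ (Fin n) → ℝ)
    (hMRF : ∀ x ∉ T, ∀ p ∈ proxSubdiff U x,
      F.inf' hne (fun β => ⟪p, v β x⟫ + p₀ (U x) * (Aset β).sup' (hA β) (l x)) ≤ -γ (U x))
    (lam : ℝ → ℝ)
    (hlam : ∀ u, lam u =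
      sInf ((fun q : EuclideanSpace ℝ (Fin n) × A => l q.1 q.2) '' {q | u ≤ U q.1})) :
    ∀ x ∉ T, ∀ p ∈ proxSubdiff U x,
      F.inf' hne (fun β =>
          ⟪p, v β x⟫ + ((p₀ (U x) + γ (U x) / M) / 2) * (Aset β).sup' (hA β) (l x)) ≤
        -((p₀ (U x) * lam (U x) + γ (U x)) / 2) := by
  intro x hx p hp
  have key := hMRF x hx p hp
  obtain ⟨β, hβF, hβeq⟩ := F.exists_mem_eq_inf' hne
    (fun β => ⟪p, v β x⟫ + p₀ (U x) * (Aset β).sup' (hA β) (l x))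
  rw [hβeq] at key
  set m : ℝ := (Aset β).sup' (hA β) (l x) with hm
  obtain ⟨a, haA, haeq⟩ := (Aset β).exists_mem_eq_sup' (hA β) (l x)
  have hM : 0 < M := lt_of_lt_of_le (hl x a).1 (hl x a).2
  have hm0 : 0 < m := by rw [hm, haeq]; exact (hl x a).1
  have hmM : m ≤ M := by rw [hm, haeq]; exact (hl x a).2
  -- bounds on lam
  have hbdd : BddBelow ((fun q : EuclideanSpace ℝ (Fin n) × A => l q.1 q.2) ''
      {q | U x ≤ U q.1}) := ⟨0, by rintro y ⟨q, _, rfl⟩; exact (hl q.1 q.2).1.le⟩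
  have hmem : l x a ∈ (fun q : EuclideanSpace ℝ (Fin n) × A => l q.1 q.2) ''
      {q | U x ≤ U q.1} := ⟨(x, a), by simp, rfl⟩
  have hlam_le : lam (U x) ≤ m := by
    rw [hlam, hm, haeq]; exact csInf_le hbdd hmem
  have hlam_nonneg : 0 ≤ lam (U x) := by
    rw [hlam]
    exact le_csInf ⟨_, hmem⟩ (by rintro y ⟨q, _, rfl⟩; exact (hl q.1 q.2).1.le)
  refine le_trans (Finset.inf'_le _ hβF) ?_
  have h1 : ⟪p, v β x⟫ ≤ -γ (U x) - p₀ (U x) * m := by linarith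
  have h2 : γ (U x) * m / M ≤ γ (U x) := by
    rw [div_le_iff₀ hM]
    nlinarith [hγ (U x)]
  have h3 : p₀ (U x) * lam (U x) ≤ p₀ (U x) * m :=
    mul_le_mul_of_nonneg_left hlam_le (hp₀ (U x)).1
  have : ((p₀ (U x) + γ (U x) / M) / 2) * m = (p₀ (U x) * m + γ (U x) * m / M) / 2 := by
    ring
  rw [this] at *
  linarith
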